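/- arXiv:2411.12738 — 4 statements merged into one kernel-verified Lean document; each statement's English description precedes it below -/
import Mathlib

section
/- Let 0 < ε < d, h ≥ 1 an integer, and let (A,B) be an ε-regular pair. If Y ⊆ B satisfies (d − ε)^{h−1}|Y| ≥ ε|B|, then the number of h-tuples (a₁,…,a_h) of distinct vertices of A for which |Y ∩ N(a₁) ∩ ⋯ ∩ N(a_h)| < (d − ε)^h |Y| is at most h·ε·|A|^h. -/
open scoped Classical

open Finset in
lemma card_interedges_sum' {V : Type*} [DecidableEq V] (G : SimpleGraph V) [DecidableRel G.Adj]
    (X Y : Finset V) :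
    (Rel.interedges G.Adj X Y).card = ∑ a ∈ X, (Y.filter (G.Adj a)).card := by
  rw [Rel.interedges_eq_biUnion, card_biUnion]
  · simp
  · intro x hx y hy hxy
    simp only [disjoint_left, mem_map, Function.Embedding.coeFn_mk]
    rintro p ⟨u, hu, rfl⟩ ⟨w, hw, h⟩
    exact hxy (Prod.mk.inj h).1.symm

open Finset in
lemma one_step {V : Type*} [Fintype V] [DecidableEq V] (G : SimpleGraph V)
    [DecidableRel G.Adj] (ε d : ℝ) (hε : 0 < ε)
    (A B : Finset V) (hreg : G.IsUniform ε A B) (hd : (G.edgeDensity A B : ℝ) = d)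
    (Y' : Finset V) (hY'B : Y' ⊆ B) (hY' : ε * B.card ≤ (Y'.card : ℝ)) :
    ((A.filter (fun a => ((Y'.filter (G.Adj a)).card : ℝ) < (d - ε) * Y'.card)).card : ℝ)
      ≤ ε * A.card := by
  set X := A.filter (fun a => ((Y'.filter (G.Adj a)).card : ℝ) < (d - ε) * Y'.card) with hX
  by_contra hcon
  push_neg at hcon
  have hXA : X ⊆ A := filter_subset _ _
  have hXpos : (0:ℝ) < X.card := lt_of_le_of_lt (by positivity) hcon
  have hXne : X.Nonempty := by
    rw [← Finset.card_pos]; exact_mod_cast hXpos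
  have hY'pos : (0:ℝ) < Y'.card := by
    rcases hXne with ⟨a, ha⟩
    rw [hX, mem_filter] at ha
    by_contra hy
    push_neg at hy
    have hzero : (Y'.card : ℝ) = 0 := le_antisymm hy (by positivity)
    have h2 := ha.2
    rw [hzero, mul_zero] at h2
    exact absurd h2 (not_lt.2 (by positivity))
  have hregXY := hreg hXA hY'B (by nlinarith) (by nlinarith)
  rw [hd] at hregXY
  have hdXY : d - ε < (G.edgeDensity X Y' : ℝ) := by
    have := abs_lt.1 hregXY
    linarith [this.1]
  -- compute edge density
  have hsum : ((Rel.interedges G.Adj X Y').card : ℝ) < X.card * ((d - ε) * Y'.card) := by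
    rw [card_interedges_sum']
    push_cast
    calc (∑ a ∈ X, ((Y'.filter (G.Adj a)).card : ℝ))
        < ∑ _a ∈ X, (d - ε) * Y'.card := by
          apply Finset.sum_lt_sum_of_nonempty hXne
          intro a ha
          rw [hX, mem_filter] at ha
          exact ha.2
      _ = X.card * ((d - ε) * Y'.card) := by rw [Finset.sum_const, nsmul_eq_mul]
  have hdens : (G.edgeDensity X Y' : ℝ) < d - ε := by
    have : (G.edgeDensity X Y' : ℝ)
        = ((Rel.interedges G.Adj X Y').card : ℝ) / (X.card * Y'.card) := by
      rw [SimpleGraph.edgeDensity, Rel.edgeDensity]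
      push_cast
      ring
    rw [this, div_lt_iff₀ (by positivity)]
    nlinarith
  linarith

open Finset in
set_option maxHeartbeats 1000000 in
lemma key_lemma {V : Type*} [Fintype V] [DecidableEq V] (G : SimpleGraph V)
    [DecidableRel G.Adj] (ε d : ℝ) (hε : 0 < ε) (hεd : ε < d) (hd1 : d ≤ 1)
    (A B Y : Finset V)
    (hreg : G.IsUniform ε A B) (hd : (G.edgeDensity A B : ℝ) = d) (hY : Y ⊆ B) :
    ∀ n : ℕ, ε * B.card ≤ (d - ε) ^ n * Y.card →
    ((Finset.univ.filter (fun a : Fin (n+1) → V =>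
        (∀ i, a i ∈ A) ∧
        ((Y.filter (fun y => ∀ i, G.Adj (a i) y)).card : ℝ) <
          (d - ε) ^ (n+1) * Y.card)).card : ℝ) ≤
      (n+1) * ε * (A.card : ℝ) ^ (n+1) := by
  have hde0 : (0:ℝ) < d - ε := by linarith
  have hde1 : d - ε ≤ 1 := by linarith
  intro n
  induction n with
  | zero =>
    intro hsz
    simp only [pow_zero, one_mul] at hsz
    set S := Finset.univ.filter (fun a : Fin 1 → V =>
        (∀ i, a i ∈ A) ∧
        ((Y.filter (fun y => ∀ i, G.Adj (a i) y)).card : ℝ) <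
          (d - ε) ^ 1 * Y.card) with hS
    have hinj : Function.Injective (fun a : Fin 1 → V => a 0) := by
      intro a b hab
      funext i
      rw [Subsingleton.elim i 0]
      exact hab
    have himg : S.image (fun a : Fin 1 → V => a 0) ⊆
        A.filter (fun v => ((Y.filter (G.Adj v)).card : ℝ) < (d - ε) * Y.card) := by
      intro v hv
      rw [mem_image] at hv
      obtain ⟨a, ha, rfl⟩ := hv
      rw [hS, mem_filter] at ha
      rw [mem_filter]
      refine ⟨ha.2.1 0, ?_⟩
      have : Y.filter (fun y => ∀ i : Fin 1, G.Adj (a i) y) = Y.filter (G.Adj (a 0)) := by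
        apply filter_congr
        intro y _
        constructor
        · intro h; exact h 0
        · intro h i; rw [Subsingleton.elim i 0]; exact h
      have h2 := ha.2.2
      rw [this, pow_one] at h2
      exact h2
    have : (S.card : ℝ) ≤ ε * A.card := by
      have hc : S.card = (S.image (fun a : Fin 1 → V => a 0)).card :=
        (card_image_of_injective _ hinj).symm
      rw [hc]
      calc ((S.image _).card : ℝ)
          ≤ ((A.filter (fun v => ((Y.filter (G.Adj v)).card : ℝ) < (d - ε) * Y.card)).card : ℝ) :=
            by exact_mod_cast card_le_card himg
        _ ≤ ε * A.card := one_step G ε d hε A B hreg hd Y hY hsz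
    refine le_trans this (le_of_eq ?_)
    push_cast
    ring
  | succ n ih =>
    intro hsz
    have hYc0 : (0:ℝ) ≤ Y.card := by positivity
    have hszn : ε * B.card ≤ (d - ε) ^ n * Y.card := by
      refine hsz.trans ?_
      apply mul_le_mul_of_nonneg_right _ hYc0
      exact pow_le_pow_of_le_one hde0.le hde1 (Nat.le_succ n)
    have IH := ih hszn
    -- notation
    set Yf : (Fin (n+1) → V) → Finset V :=
      fun f => Y.filter (fun y => ∀ i, G.Adj (f i) y) with hYf
    set Bd : Finset (Fin (n+1) → V) := Finset.univ.filter (fun f =>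
        (∀ i, f i ∈ A) ∧ ((Yf f).card : ℝ) < (d - ε) ^ (n+1) * Y.card) with hBd
    set Gd : Finset (Fin (n+1) → V) := Finset.univ.filter (fun f =>
        (∀ i, f i ∈ A) ∧ (d - ε) ^ (n+1) * Y.card ≤ ((Yf f).card : ℝ)) with hGd
    set Xf : (Fin (n+1) → V) → Finset V :=
      fun f => A.filter (fun v => (((Yf f).filter (G.Adj v)).card : ℝ) < (d - ε) * (Yf f).card)
      with hXf
    set W : Finset ((Fin (n+1) → V) × V) :=
      (Bd ×ˢ A) ∪ Gd.biUnion (fun f => {f} ×ˢ Xf f) with hW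
    set S := Finset.univ.filter (fun a : Fin (n+2) → V =>
        (∀ i, a i ∈ A) ∧
        ((Y.filter (fun y => ∀ i, G.Adj (a i) y)).card : ℝ) <
          (d - ε) ^ (n+2) * Y.card) with hS
    have hφ : ∀ a ∈ S, ((fun i => a i.castSucc, a (Fin.last (n+1))) :
        (Fin (n+1) → V) × V) ∈ W := by
      intro a ha
      rw [hS, mem_filter] at ha
      obtain ⟨-, hmem, hcard⟩ := ha
      set f : Fin (n+1) → V := fun i => a i.castSucc with hf
      set v : V := a (Fin.last (n+1)) with hv
      have hfA : ∀ i, f i ∈ A := fun i => hmem _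
      have hvA : v ∈ A := hmem _
      have hsplit : Y.filter (fun y => ∀ i : Fin (n+2), G.Adj (a i) y)
          = (Yf f).filter (G.Adj v) := by
        rw [hYf]
        ext y
        simp only [mem_filter, and_assoc]
        constructor
        · rintro ⟨hy, hall⟩
          exact ⟨hy, fun i => hall i.castSucc, hall (Fin.last (n+1))⟩
        · rintro ⟨hy, hpre, hlast⟩
          refine ⟨hy, fun i => ?_⟩
          refine Fin.lastCases ?_ ?_ i
          · exact hlast
          · intro j; exact hpre j
      by_cases hfBd : f ∈ Bd
      · exact mem_union_left _ (mem_product.2 ⟨hfBd, hvA⟩)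
      · have hfGd : f ∈ Gd := by
          rw [hGd, mem_filter]
          refine ⟨mem_univ _, hfA, ?_⟩
          rw [hBd, mem_filter] at hfBd
          push_neg at hfBd
          exact hfBd (mem_univ _) hfA
        have hvXf : v ∈ Xf f := by
          rw [hXf, mem_filter]
          refine ⟨hvA, ?_⟩
          rw [hsplit] at hcard
          calc (((Yf f).filter (G.Adj v)).card : ℝ)
              < (d - ε) ^ (n+2) * Y.card := hcard
            _ = (d - ε) * ((d - ε) ^ (n+1) * Y.card) := by ring
            _ ≤ (d - ε) * (Yf f).card := by
                apply mul_le_mul_of_nonneg_left _ hde0.le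
                rw [hGd, mem_filter] at hfGd
                exact hfGd.2.2
        apply mem_union_right
        apply mem_biUnion.2
        exact ⟨f, hfGd, mem_product.2 ⟨mem_singleton_self f, hvXf⟩⟩
    have hScard : S.card ≤ W.card := by
      apply card_le_card_of_injOn _ hφ
      intro a _ b _ hab
      have h1 := congrArg Prod.fst hab
      have h2 := congrArg Prod.snd hab
      funext i
      refine Fin.lastCases ?_ ?_ i
      · exact h2
      · intro j; exact congrFun h1 j
    -- bound card W
    have hGdcard : (Gd.card : ℝ) ≤ (A.card : ℝ) ^ (n+1) := by
      have : Gd ⊆ Fintype.piFinset (fun _ : Fin (n+1) => A) := by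
        intro f hf
        rw [hGd, mem_filter] at hf
        rw [Fintype.mem_piFinset]
        exact hf.2.1
      calc (Gd.card : ℝ) ≤ ((Fintype.piFinset (fun _ : Fin (n+1) => A)).card : ℝ) := by
            exact_mod_cast card_le_card this
        _ = (A.card : ℝ) ^ (n+1) := by
            rw [Fintype.card_piFinset]
            push_cast
            simp
    have hXfcard : ∀ f ∈ Gd, ((Xf f).card : ℝ) ≤ ε * A.card := by
      intro f hf
      rw [hGd, mem_filter] at hf
      apply one_step G ε d hε A B hreg hd (Yf f)
      · exact (filter_subset _ _).trans hY
      · calc ε * B.card ≤ (d - ε) ^ (n+1) * Y.card := hsz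
          _ ≤ ((Yf f).card : ℝ) := hf.2.2
    have hWcard : (W.card : ℝ) ≤ (n+1) * ε * (A.card : ℝ) ^ (n+1) * A.card
        + (A.card : ℝ) ^ (n+1) * (ε * A.card) := by
      have h1 : (W.card : ℝ) ≤ ((Bd ×ˢ A).card : ℝ)
          + ((Gd.biUnion (fun f => {f} ×ˢ Xf f)).card : ℝ) := by
        rw [hW]
        exact_mod_cast card_union_le _ _
      have h2 : ((Bd ×ˢ A).card : ℝ) ≤ (n+1) * ε * (A.card : ℝ) ^ (n+1) * A.card := by
        rw [card_product]
        push_cast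
        apply mul_le_mul_of_nonneg_right IH (by positivity)
      have h3 : ((Gd.biUnion (fun f => {f} ×ˢ Xf f)).card : ℝ)
          ≤ (A.card : ℝ) ^ (n+1) * (ε * A.card) := by
        calc ((Gd.biUnion (fun f => {f} ×ˢ Xf f)).card : ℝ)
            ≤ ((∑ f ∈ Gd, ({f} ×ˢ Xf f).card : ℕ) : ℝ) := by
              exact_mod_cast card_biUnion_le
          _ = ∑ f ∈ Gd, ((Xf f).card : ℝ) := by
              push_cast
              apply Finset.sum_congr rfl
              intro f _
              rw [card_product, card_singleton, one_mul]
          _ ≤ ∑ _f ∈ Gd, ε * A.card := Finset.sum_le_sum hXfcard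
          _ = Gd.card * (ε * A.card) := by rw [Finset.sum_const, nsmul_eq_mul]
          _ ≤ (A.card : ℝ) ^ (n+1) * (ε * A.card) := by
              apply mul_le_mul_of_nonneg_right hGdcard (by positivity)
      linarith
    refine le_trans (le_trans (by exact_mod_cast hScard : (S.card : ℝ) ≤ (W.card : ℝ)) hWcard)
      (le_of_eq ?_)
    push_cast
    ring

/-- Intersection property: in an ε-regular pair (A,B) of density d, if Y ⊆ B has
(d−ε)^{h−1}|Y| ≥ ε|B|, then the number of h-tuples of distinct vertices of A
whose common neighborhood in Y has size < (d−ε)^h|Y| is at most h·ε·|A|^h. -/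
theorem stmt_5 {V : Type*} [Fintype V] [DecidableEq V] (G : SimpleGraph V)
    [DecidableRel G.Adj] (ε d : ℝ) (h : ℕ) (hh : 1 ≤ h)
    (hε : 0 < ε) (hεd : ε < d)
    (A B Y : Finset V) (hAB : Disjoint A B)
    (hreg : G.IsUniform ε A B) (hd : (G.edgeDensity A B : ℝ) = d)
    (hY : Y ⊆ B) (hYsize : ε * B.card ≤ (d - ε) ^ (h - 1) * Y.card) :
    ((Finset.univ.filter (fun a : Fin h → V =>
        Function.Injective a ∧ (∀ i, a i ∈ A) ∧
        ((Y.filter (fun y => ∀ i, G.Adj (a i) y)).card : ℝ) <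
          (d - ε) ^ h * Y.card)).card : ℝ) ≤
      h * ε * (A.card : ℝ) ^ h := by
  obtain ⟨n, rfl⟩ : ∃ n, h = n + 1 := ⟨h - 1, (Nat.succ_pred_eq_of_pos hh).symm⟩
  have hd1 : d ≤ 1 := by
    rw [← hd]
    exact_mod_cast G.edgeDensity_le_one A B
  have hsub : (Finset.univ.filter (fun a : Fin (n+1) → V =>
        Function.Injective a ∧ (∀ i, a i ∈ A) ∧
        ((Y.filter (fun y => ∀ i, G.Adj (a i) y)).card : ℝ) <
          (d - ε) ^ (n+1) * Y.card)) ⊆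
      (Finset.univ.filter (fun a : Fin (n+1) → V =>
        (∀ i, a i ∈ A) ∧
        ((Y.filter (fun y => ∀ i, G.Adj (a i) y)).card : ℝ) <
          (d - ε) ^ (n+1) * Y.card)) := by
    exact Finset.monotone_filter_right Finset.univ (fun a _ ha => ha.2)
  have hsz : ε * B.card ≤ (d - ε) ^ n * Y.card := by
    simpa using hYsize
  calc ((Finset.univ.filter (fun a : Fin (n+1) → V =>
        Function.Injective a ∧ (∀ i, a i ∈ A) ∧
        ((Y.filter (fun y => ∀ i, G.Adj (a i) y)).card : ℝ) <
          (d - ε) ^ (n+1) * Y.card)).card : ℝ)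
      ≤ ((Finset.univ.filter (fun a : Fin (n+1) → V =>
        (∀ i, a i ∈ A) ∧
        ((Y.filter (fun y => ∀ i, G.Adj (a i) y)).card : ℝ) <
          (d - ε) ^ (n+1) * Y.card)).card : ℝ) := by
        exact_mod_cast Finset.card_le_card hsub
    _ ≤ (n+1) * ε * (A.card : ℝ) ^ (n+1) :=
        key_lemma G ε d hε hεd hd1 A B Y hreg hd hY n hsz
    _ = (↑(n+1)) * ε * (A.card : ℝ) ^ (n+1) := by push_cast; ring
end

section
/- Let k, k' be positive integers and let (A,B) be an ε-regular pair with density d satisfying (d − ε)^{k−1} ≥ ε, k·ε·|A|^k < |A|(|A|−1)⋯(|A|−k+1), and (d − ε)^k |B| ≥ k'. Then the bipartite graph induced on (A,B) contains a copy of K_{k,k'} with k vertices in A and k' vertices in B. -/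
set_option maxHeartbeats 1000000 in
/-- An ε-regular pair (A,B) with density d satisfying (d−ε)^{k−1} ≥ ε,
k·ε·|A|^k < (|A|)_k, and (d−ε)^k|B| ≥ k' contains a copy of K_{k,k'} with
k vertices in A and k' vertices in B. -/
theorem stmt_6 {V : Type*} [DecidableEq V] (G : SimpleGraph V)
    [DecidableRel G.Adj] (ε d : ℝ) (k k' : ℕ) (hk : 0 < k) (hk' : 0 < k')
    (hε : 0 < ε) (A B : Finset V) (hAB : Disjoint A B)
    (hreg : G.IsUniform ε A B) (hd : (G.edgeDensity A B : ℝ) = d)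
    (h1 : ε ≤ (d - ε) ^ (k - 1))
    (h2 : k * ε * (A.card : ℝ) ^ k < (A.card.descFactorial k : ℝ))
    (h3 : (k' : ℝ) ≤ (d - ε) ^ k * B.card) :
    ∃ S T : Finset V, S ⊆ A ∧ T ⊆ B ∧ S.card = k ∧ T.card = k' ∧
      ∀ a ∈ S, ∀ b ∈ T, G.Adj a b := by
  classical
  -- basic positivity facts
  have hd1 : d ≤ 1 := by
    rw [← hd]; exact_mod_cast G.edgeDensity_le_one A B
  have hk'R : (0 : ℝ) < k' := by exact_mod_cast hk'
  have hpkB : (0 : ℝ) < (d - ε) ^ k * B.card := lt_of_lt_of_le hk'R h3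
  have hpowk : (0 : ℝ) < (d - ε) ^ k := by
    by_contra h
    push_neg at h
    exact absurd (mul_nonpos_of_nonpos_of_nonneg h (Nat.cast_nonneg _)) (not_le.2 hpkB)
  have hBpos : (0 : ℝ) < B.card := by
    by_contra h
    push_neg at h
    have : ((B.card : ℝ)) = 0 := le_antisymm h (Nat.cast_nonneg _)
    rw [this, mul_zero] at hpkB
    exact lt_irrefl _ hpkB
  have hpowk1 : (0 : ℝ) < (d - ε) ^ (k - 1) := lt_of_lt_of_le hε h1
  have hdε : 0 < d - ε := by
    have hodd : Odd (k + (k - 1)) := by rw [Nat.odd_iff]; omega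
    have hpos : (0 : ℝ) < (d - ε) ^ (k + (k - 1)) := by
      rw [pow_add]; exact mul_pos hpowk hpowk1
    exact hodd.pow_pos_iff.mp hpos
  have hdε1 : d - ε < 1 := by linarith
  -- facts about |A|
  have hdfpos : (0 : ℝ) < (A.card.descFactorial k : ℝ) :=
    lt_of_le_of_lt (by positivity) h2
  have hdfposN : 0 < A.card.descFactorial k := by exact_mod_cast hdfpos
  have hkA : k ≤ A.card := by
    by_contra h
    push_neg at h
    rw [Nat.descFactorial_eq_zero_iff_lt.2 h] at hdfposN
    exact lt_irrefl _ hdfposN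
  have hApos : (0 : ℝ) < A.card := by
    have : 0 < A.card := lt_of_lt_of_le hk hkA
    exact_mod_cast this
  -- key arithmetic: ε|A| + i < |A| for i < k
  have hstep : ∀ i : ℕ, i < k → ε * A.card + i < A.card := by
    intro i hik
    obtain ⟨m, rfl⟩ : ∃ m, k = m + 1 := ⟨k - 1, by omega⟩
    have him : (i : ℝ) ≤ m := by exact_mod_cast Nat.lt_succ_iff.mp hik
    have hmA : m ≤ A.card := le_trans (Nat.le_succ m) hkA
    have hdf : (A.card.descFactorial (m + 1) : ℝ) ≤ ((A.card : ℝ) - m) * (A.card : ℝ) ^ m := by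
      rw [Nat.descFactorial_succ]
      push_cast [Nat.cast_sub hmA]
      have hmR : (m : ℝ) ≤ A.card := by exact_mod_cast hmA
      exact mul_le_mul_of_nonneg_left (by exact_mod_cast Nat.descFactorial_le_pow A.card m)
        (by linarith)
    have h2' : ((m : ℝ) + 1) * ε * (A.card : ℝ) ^ (m + 1) <
        ((A.card : ℝ) - m) * (A.card : ℝ) ^ m := by
      calc ((m : ℝ) + 1) * ε * (A.card : ℝ) ^ (m + 1)
          = ((m + 1 : ℕ) : ℝ) * ε * (A.card : ℝ) ^ (m + 1) := by push_cast; ring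
        _ < (A.card.descFactorial (m + 1) : ℝ) := h2
        _ ≤ ((A.card : ℝ) - m) * (A.card : ℝ) ^ m := hdf
    have hAm : (0 : ℝ) < (A.card : ℝ) ^ m := by positivity
    have hdiv : ((m : ℝ) + 1) * ε * A.card < (A.card : ℝ) - m := by
      have := h2'
      rw [pow_succ] at this
      nlinarith
    have hεA : ε * (A.card : ℝ) ≤ ((m : ℝ) + 1) * ε * A.card := by
      nlinarith [mul_pos hε hApos]
    linarith
  -- the greedy construction
  have main : ∀ i, i ≤ k → ∃ S : Finset V, S ⊆ A ∧ S.card = i ∧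
      (d - ε) ^ i * B.card ≤ (((B.filter fun b => ∀ a ∈ S, G.Adj a b)).card : ℝ) := by
    intro i
    induction i with
    | zero =>
      intro _
      refine ⟨∅, Finset.empty_subset _, Finset.card_empty, ?_⟩
      simp
    | succ i ih =>
      intro hik
      obtain ⟨S, hSA, hScard, hT⟩ := ih (Nat.le_of_succ_le hik)
      set T := B.filter fun b => ∀ a ∈ S, G.Adj a b with hTdef
      have hTB : T ⊆ B := Finset.filter_subset _ _
      have hik' : i < k := hik
      have hpowi : ε ≤ (d - ε) ^ i :=
        h1.trans (pow_le_pow_of_le_one hdε.le hdε1.le (by omega))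
      have hTbig : (B.card : ℝ) * ε ≤ T.card := by
        calc (B.card : ℝ) * ε = ε * B.card := mul_comm _ _
          _ ≤ (d - ε) ^ i * B.card := mul_le_mul_of_nonneg_right hpowi (Nat.cast_nonneg _)
          _ ≤ T.card := hT
      have hTpos : (0 : ℝ) < T.card := lt_of_lt_of_le (by positivity) hTbig
      -- the bad set
      set X := A.filter fun a => ((T.filter (G.Adj a)).card : ℝ) < (d - ε) * T.card with hXdef
      have hXA : X ⊆ A := Finset.filter_subset _ _
      have hXsmall : (X.card : ℝ) < ε * A.card := by
        by_contra hcon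
        push_neg at hcon
        have hXbig : (A.card : ℝ) * ε ≤ X.card := by rw [mul_comm]; exact hcon
        have hXpos : (0 : ℝ) < X.card := lt_of_lt_of_le (by positivity) hXbig
        have hu := hreg hXA hTB hXbig hTbig
        rw [hd] at hu
        -- bound the number of edges between X and T
        have hecard : ((Rel.interedges G.Adj X T).card : ℝ) ≤ X.card * ((d - ε) * T.card) := by
          refine (Nat.cast_le.2 <|
            (Finset.card_le_card <|
              subset_of_eq (Rel.interedges_eq_biUnion _)).trans
            Finset.card_biUnion_le).trans ?_
          push_cast
          simp_rw [Finset.card_map]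
          rw [← nsmul_eq_mul]
          refine Finset.sum_le_card_nsmul _ _ _ fun x hx => ?_
          exact (Finset.mem_filter.1 hx).2.le
        have hdXT : (G.edgeDensity X T : ℝ) ≤ d - ε := by
          have hXT : (G.edgeDensity X T : ℝ)
              = ((Rel.interedges G.Adj X T).card : ℝ) / (X.card * T.card) := by
            rw [SimpleGraph.edgeDensity, Rel.edgeDensity]
            push_cast
            ring
          rw [hXT, div_le_iff₀ (by positivity)]
          calc ((Rel.interedges G.Adj X T).card : ℝ)
              ≤ X.card * ((d - ε) * T.card) := hecard
            _ = (d - ε) * (X.card * T.card) := by ring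
        rw [abs_sub_lt_iff] at hu
        linarith [hu.2]
      -- pick a fresh good vertex
      have hUA : S ∪ X ⊆ A := Finset.union_subset hSA hXA
      have hUcard : ((S ∪ X).card : ℝ) < A.card := by
        have hle : ((S ∪ X).card : ℝ) ≤ S.card + X.card := by
          exact_mod_cast Finset.card_union_le S X
        have := hstep i hik'
        rw [hScard] at hle
        linarith
      have hUcardN : (S ∪ X).card < A.card := by exact_mod_cast hUcard
      have hne : (A \ (S ∪ X)).Nonempty := by
        rw [← Finset.card_pos, Finset.card_sdiff_of_subset hUA]
        omega
      obtain ⟨a, ha⟩ := hne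
      rw [Finset.mem_sdiff, Finset.mem_union] at ha
      obtain ⟨haA, haSX⟩ := ha
      push_neg at haSX
      obtain ⟨haS, haX⟩ := haSX
      have hadeg : (d - ε) * T.card ≤ ((T.filter (G.Adj a)).card : ℝ) := by
        by_contra h
        push_neg at h
        exact haX (Finset.mem_filter.2 ⟨haA, h⟩)
      refine ⟨insert a S, Finset.insert_subset haA hSA, ?_, ?_⟩
      · rw [Finset.card_insert_of_notMem haS, hScard]
      · have hfilter : (B.filter fun b => ∀ x ∈ insert a S, G.Adj x b)
            = T.filter (G.Adj a) := by
          ext b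
          simp only [hTdef, Finset.mem_filter, Finset.forall_mem_insert]
          tauto
        rw [hfilter]
        calc (d - ε) ^ (i + 1) * B.card = (d - ε) * ((d - ε) ^ i * B.card) := by ring
          _ ≤ (d - ε) * T.card := mul_le_mul_of_nonneg_left hT hdε.le
          _ ≤ ((T.filter (G.Adj a)).card : ℝ) := hadeg
  obtain ⟨S, hSA, hScard, hTcard⟩ := main k le_rfl
  have hk'le : k' ≤ (B.filter fun b => ∀ a ∈ S, G.Adj a b).card := by
    have : (k' : ℝ) ≤ ((B.filter fun b => ∀ a ∈ S, G.Adj a b).card : ℝ) := h3.trans hTcard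
    exact_mod_cast this
  obtain ⟨T, hTsub, hTc⟩ := Finset.exists_subset_card_eq hk'le
  refine ⟨S, T, hSA, hTsub.trans (Finset.filter_subset _ _), hScard, hTc, ?_⟩
  intro a haS b hbT
  exact (Finset.mem_filter.1 (hTsub hbT)).2 a haS
end

section
/- Let 0 < ε ≪ d ≪ d' and let h ≥ 1 be an integer. Let (A,B) be an (ε,d)-super-regular pair with (1−ε)n ≤ |A|,|B| ≤ n for n sufficiently large, and let v be a vertex not in A ∪ B with deg(v,A) ≥ d'|A|. Then the graph contains a copy of K_{h,h} consisting of v, h vertices of A (all adjacent to v), and h−1 vertices of B. -/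
/-- (ε,d)-super-regular pair. -/
def IsSuperRegular {V : Type*} [DecidableEq V] (G : SimpleGraph V)
    [DecidableRel G.Adj] (ε d : ℝ) (A B : Finset V) : Prop :=
  (∀ X ⊆ A, ∀ Y ⊆ B, ε * A.card ≤ X.card → ε * B.card ≤ Y.card →
    d < (G.edgeDensity X Y : ℝ)) ∧
  (∀ a ∈ A, d * B.card < ((B.filter (G.Adj a)).card : ℝ)) ∧
  (∀ b ∈ B, d * A.card < ((A.filter (G.Adj b)).card : ℝ))

private lemma card_interedges_eq_sum_aux {V : Type} [DecidableEq V] (G : SimpleGraph V)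
    [DecidableRel G.Adj] (s t : Finset V) :
    (G.interedges s t).card = ∑ a ∈ s, (t.filter (G.Adj a)).card := by
  rw [SimpleGraph.interedges, Rel.interedges_eq_biUnion, Finset.card_biUnion]
  · simp
  · intro x _ y _ hxy
    simp only [Finset.disjoint_left, Finset.mem_map, Function.Embedding.coeFn_mk]
    rintro p ⟨a, _, rfl⟩ ⟨b, _, hEq⟩
    exact hxy (Prod.mk.injEq .. ▸ hEq).1.symm

/-- Key counting lemma: given the density condition, a large `X ⊆ A` and a small
forbidden set `F`, there is `b ∈ B \ F` with many neighbours in `X`. -/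
private lemma exists_good_vertex {V : Type} [DecidableEq V] (G : SimpleGraph V)
    [DecidableRel G.Adj] {ε d : ℝ} {A B X F : Finset V} (hε : 0 ≤ ε)
    (hreg : ∀ X ⊆ A, ∀ Y ⊆ B, ε * A.card ≤ X.card → ε * B.card ≤ Y.card →
      d < (G.edgeDensity X Y : ℝ))
    (hXA : X ⊆ A) (hX : ε * A.card ≤ X.card) (hXpos : 0 < X.card)
    (hF : (F.card : ℝ) < (B.card : ℝ) - ε * B.card) :
    ∃ b ∈ B, b ∉ F ∧ d * X.card ≤ ((X.filter (G.Adj b)).card : ℝ) := by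
  by_contra hcon
  push_neg at hcon
  set Y : Finset V := B \ F with hY
  have hYB : Y ⊆ B := Finset.sdiff_subset
  have hBsub : B ⊆ Y ∪ F := by
    intro x hx
    by_cases hxF : x ∈ F
    · exact Finset.mem_union_right _ hxF
    · exact Finset.mem_union_left _ (Finset.mem_sdiff.2 ⟨hx, hxF⟩)
  have hYcard : (B.card : ℝ) - F.card ≤ Y.card := by
    have h1 : B.card ≤ Y.card + F.card :=
      le_trans (Finset.card_le_card hBsub) (Finset.card_union_le _ _)
    have : (B.card : ℝ) ≤ (Y.card : ℝ) + F.card := by exact_mod_cast h1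
    linarith
  have hYbig : ε * B.card < Y.card := by linarith
  have hYpos : 0 < Y.card := by
    have : (0 : ℝ) < Y.card := lt_of_le_of_lt (mul_nonneg hε (Nat.cast_nonneg _)) hYbig
    exact_mod_cast this
  have hYne : Y.Nonempty := Finset.card_pos.1 hYpos
  have hd := hreg X hXA Y hYB hX hYbig.le
  -- express density through interedges
  have hcomm : (G.interedges X Y).card = (G.interedges Y X).card :=
    by haveI := G.symm; exact Rel.card_interedges_comm _ _
  have hsum : (G.interedges Y X).card = ∑ b ∈ Y, (X.filter (G.Adj b)).card :=
    card_interedges_eq_sum_aux G Y X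
  have hstrict : ((G.interedges Y X).card : ℝ) < Y.card * (d * X.card) := by
    rw [hsum]
    push_cast
    calc ∑ b ∈ Y, ((X.filter (G.Adj b)).card : ℝ)
        < ∑ _b ∈ Y, d * X.card := by
          refine Finset.sum_lt_sum_of_nonempty hYne fun b hb => ?_
          exact hcon b (hYB hb) (Finset.mem_sdiff.1 hb).2
      _ = Y.card * (d * X.card) := by
          rw [Finset.sum_const, nsmul_eq_mul]
  have hdens : (G.edgeDensity X Y : ℝ) = ((G.interedges X Y).card : ℝ)
      / ((X.card : ℝ) * Y.card) := by
    rw [SimpleGraph.edgeDensity_def]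
    push_cast
    ring
  have hXpos' : (0 : ℝ) < X.card := by exact_mod_cast hXpos
  have hYpos' : (0 : ℝ) < Y.card := by exact_mod_cast hYpos
  rw [hdens, lt_div_iff₀ (by positivity)] at hd
  rw [hcomm] at hd
  nlinarith [hd, hstrict]

/-- For 0 < ε ≪ d ≪ d' and h ≥ 1: if (A,B) is an (ε,d)-super-regular pair with
(1−ε)n ≤ |A|,|B| ≤ n (n large), and v ∉ A ∪ B has deg(v,A) ≥ d'|A|, then there
is a copy of K_{h,h} consisting of v, h vertices of A adjacent to v, and h−1
vertices of B (complete between A-side and the side {v} ∪ T). -/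
theorem stmt_7 (h : ℕ) (hh : 1 ≤ h) (d' : ℝ) (hd' : 0 < d') :
    ∃ d₀ : ℝ, 0 < d₀ ∧ ∀ d : ℝ, 0 < d → d ≤ d₀ →
    ∃ ε₀ : ℝ, 0 < ε₀ ∧ ∀ ε : ℝ, 0 < ε → ε ≤ ε₀ →
    ∃ n₀ : ℕ, ∀ n : ℕ, n₀ ≤ n →
    ∀ {V : Type} [DecidableEq V] (G : SimpleGraph V) [DecidableRel G.Adj]
      (A B : Finset V) (v : V),
      Disjoint A B → v ∉ A ∪ B →
      IsSuperRegular G ε d A B →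
      (1 - ε) * n ≤ (A.card : ℝ) → (A.card : ℝ) ≤ n →
      (1 - ε) * n ≤ (B.card : ℝ) → (B.card : ℝ) ≤ n →
      d' * A.card ≤ ((A.filter (G.Adj v)).card : ℝ) →
      ∃ S T : Finset V, S ⊆ A ∧ T ⊆ B ∧ S.card = h ∧ T.card = h - 1 ∧
        (∀ a ∈ S, G.Adj v a) ∧ ∀ b ∈ T, ∀ a ∈ S, G.Adj b a := by
  refine ⟨1, one_pos, fun d hd hd1 => ?_⟩
  set c : ℝ := d ^ (h - 1) * d' with hc
  have hcpos : 0 < c := by positivity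
  refine ⟨min c (1/2), lt_min hcpos (by norm_num), fun ε hε hεle => ?_⟩
  have hεc : ε ≤ c := le_trans hεle (min_le_left _ _)
  have hεhalf : ε ≤ 1/2 := le_trans hεle (min_le_right _ _)
  refine ⟨max (4 * h) ⌈(2 * h : ℝ) / c⌉₊, fun n hn => ?_⟩
  intro V _ G _ A B v _hAB _hv hsr hA1 hA2 hB1 hB2 hdeg
  obtain ⟨hreg, _, _⟩ := hsr
  have hn4 : 4 * h ≤ n := le_trans (le_max_left _ _) hn
  have hnc : (2 * h : ℝ) / c ≤ n := by
    have := le_trans (le_max_right (4 * h) _) hn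
    calc (2 * h : ℝ) / c ≤ ⌈(2 * h : ℝ) / c⌉₊ := Nat.le_ceil _
      _ ≤ n := by exact_mod_cast this
  have hhn : (h : ℝ) ≤ c * n / 2 := by
    rw [div_le_iff₀ hcpos] at hnc
    linarith
  have hn4' : (4 * h : ℝ) ≤ n := by exact_mod_cast hn4
  have hhpos : (0 : ℝ) < h := by exact_mod_cast hh
  have hhalf : (1 / 2 : ℝ) * n ≤ (1 - ε) * n :=
    mul_le_mul_of_nonneg_right (by linarith) (Nat.cast_nonneg n)
  have hApos : (0 : ℝ) < A.card := by linarith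
  have hBhalf : (n : ℝ) / 2 ≤ B.card := by linarith
  -- N = neighbours of v in A
  set N : Finset V := A.filter (G.Adj v) with hN
  have hNA : N ⊆ A := Finset.filter_subset _ _
  -- main greedy claim
  have key : ∀ i : ℕ, i ≤ h - 1 → ∃ X T : Finset V, X ⊆ N ∧ T ⊆ B ∧ T.card = i ∧
      d ^ i * (d' * A.card) ≤ (X.card : ℝ) ∧ ∀ b ∈ T, ∀ a ∈ X, G.Adj b a := by
    intro i
    induction i with
    | zero =>
      intro _
      exact ⟨N, ∅, Finset.Subset.refl _, Finset.empty_subset _, Finset.card_empty,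
        by simpa using hdeg, by simp⟩
    | succ i ih =>
      intro hi
      obtain ⟨X, T, hXN, hTB, hTcard, hXcard, hcomp⟩ := ih (Nat.le_of_succ_le hi)
      have hile : i ≤ h - 1 := Nat.le_of_succ_le hi
      have hdle : d ^ (h - 1) ≤ d ^ i := pow_le_pow_of_le_one hd.le hd1 hile
      have hlow : c * A.card ≤ d ^ i * (d' * A.card) := by
        rw [hc, mul_assoc]
        exact mul_le_mul_of_nonneg_right hdle (by positivity)
      have hXbig : ε * A.card ≤ (X.card : ℝ) := by
        have : ε * A.card ≤ c * A.card := mul_le_mul_of_nonneg_right hεc hApos.le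
        linarith
      have hXpos : 0 < X.card := by
        have h0 : (0 : ℝ) < ε * A.card := mul_pos hε hApos
        have : (0 : ℝ) < X.card := by linarith
        exact_mod_cast this
      have hF : (T.card : ℝ) < (B.card : ℝ) - ε * B.card := by
        rw [hTcard]
        have hiR : (i : ℝ) ≤ (h : ℝ) - 1 := by
          have : (i : ℝ) ≤ ((h - 1 : ℕ) : ℝ) := by exact_mod_cast hile
          rwa [Nat.cast_sub hh, Nat.cast_one] at this
        have hBpos : (0 : ℝ) ≤ B.card := Nat.cast_nonneg _
        have hεB : ε * B.card ≤ (1 / 2) * B.card :=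
          mul_le_mul_of_nonneg_right hεhalf hBpos
        linarith
      obtain ⟨b, hbB, hbT, hbdeg⟩ := exists_good_vertex G hε.le hreg
        (hXN.trans hNA) hXbig hXpos hF
      refine ⟨X.filter (G.Adj b), insert b T, (Finset.filter_subset _ _).trans hXN,
        Finset.insert_subset hbB hTB, ?_, ?_, ?_⟩
      · rw [Finset.card_insert_of_notMem hbT, hTcard]
      · calc d ^ (i + 1) * (d' * A.card) = d * (d ^ i * (d' * A.card)) := by ring
          _ ≤ d * X.card := mul_le_mul_of_nonneg_left hXcard hd.le
          _ ≤ ((X.filter (G.Adj b)).card : ℝ) := hbdeg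
      · intro b' hb' a ha
        rcases Finset.mem_insert.1 hb' with rfl | hb'T
        · exact (Finset.mem_filter.1 ha).2
        · exact hcomp b' hb'T a (Finset.filter_subset _ _ ha)
  obtain ⟨X, T, hXN, hTB, hTcard, hXcard, hcomp⟩ := key (h - 1) le_rfl
  have hhX : h ≤ X.card := by
    have h1 : c * ((1 - ε) * n) ≤ c * A.card := mul_le_mul_of_nonneg_left hA1 hcpos.le
    have h2 : c * n / 2 ≤ c * ((1 - ε) * n) := by
      have := mul_le_mul_of_nonneg_left hhalf hcpos.le
      linarith
    have h3 : (h : ℝ) ≤ X.card := by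
      calc (h : ℝ) ≤ c * n / 2 := hhn
        _ ≤ c * A.card := le_trans h2 h1
        _ ≤ d ^ (h - 1) * (d' * A.card) := le_of_eq (by rw [hc]; ring)
        _ ≤ X.card := hXcard
    exact_mod_cast h3
  obtain ⟨S, hSX, hScard⟩ := Finset.exists_subset_card_eq hhX
  refine ⟨S, T, (hSX.trans hXN).trans hNA, hTB, hScard, hTcard, ?_, ?_⟩
  · intro a ha
    exact (Finset.mem_filter.1 (hXN (hSX ha))).2
  · intro b hb a ha
    exact hcomp b hb a (hSX ha)
end

section
/- Let h ≥ 1 and let G be the bipartite graph with parts A = A₁ ⊔ A₂, B = B₁ ⊔ B₂ with |A₁| = |B₁| = ⌊n/2⌋ + 1 and |A₂| = |B₂| = ⌈n/2⌉ − 1, whose edge set consists of all edges between A₁ and B₂ and all edges between A₂ and B₁. Suppose H is a bipartite graph on A ∪ B (respecting the bipartition) that contains no copy of K_{2,2} and no copy of K_{1,h} with all vertices in A₁ ∪ B₁. Then G ∪ H has no perfect K_{h,h}-tiling. -/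
/-- Extremal example for large α: let G have parts A = A₁ ⊔ A₂, B = B₁ ⊔ B₂
with |A₁|=|B₁|=⌊n/2⌋+1, |A₂|=|B₂|=⌈n/2⌉−1 and exactly all edges A₁–B₂ and
A₂–B₁. If H is a bipartite graph on the same bipartition containing no K_{2,2}
and no K_{1,h} with all vertices in A₁ ∪ B₁, then G ∪ H has no perfect
K_{h,h}-tiling. -/
theorem stmt_12 (h n : ℕ) (hh : 1 ≤ h) (hdvd : h ∣ n)
    {V : Type} [DecidableEq V] (A₁ A₂ B₁ B₂ : Finset V)
    (hdA : Disjoint A₁ A₂) (hdB : Disjoint B₁ B₂)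
    (hdAB : Disjoint (A₁ ∪ A₂) (B₁ ∪ B₂))
    (hA₁ : A₁.card = n / 2 + 1) (hB₁ : B₁.card = n / 2 + 1)
    (hA₂ : A₂.card = (n + 1) / 2 - 1) (hB₂ : B₂.card = (n + 1) / 2 - 1)
    (G H : SimpleGraph V)
    (hG : ∀ u v, G.Adj u v ↔
      ((u ∈ A₁ ∧ v ∈ B₂) ∨ (v ∈ A₁ ∧ u ∈ B₂) ∨
       (u ∈ A₂ ∧ v ∈ B₁) ∨ (v ∈ A₂ ∧ u ∈ B₁)))
    (hHbip : ∀ u v, H.Adj u v →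
      (u ∈ A₁ ∪ A₂ ∧ v ∈ B₁ ∪ B₂) ∨ (v ∈ A₁ ∪ A₂ ∧ u ∈ B₁ ∪ B₂))
    (hK22 : ¬ ∃ a a' b b', a ∈ A₁ ∧ a' ∈ A₁ ∧ b ∈ B₁ ∧ b' ∈ B₁ ∧
      a ≠ a' ∧ b ≠ b' ∧ H.Adj a b ∧ H.Adj a b' ∧ H.Adj a' b ∧ H.Adj a' b')
    (hK1h : ¬ ∃ (v : V) (L : Finset V), v ∈ A₁ ∪ B₁ ∧ ↑L ⊆ (A₁ ∪ B₁ : Finset V) ∧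
      L.card = h ∧ ∀ x ∈ L, H.Adj v x) :
    ¬ ∃ (k : ℕ) (S T : Fin k → Finset V),
      (∀ i, S i ⊆ A₁ ∪ A₂ ∧ T i ⊆ B₁ ∪ B₂ ∧ (S i).card = h ∧ (T i).card = h ∧
        ∀ a ∈ S i, ∀ b ∈ T i, (G ⊔ H).Adj a b) ∧
      (∀ i j, i ≠ j → Disjoint (S i) (S j) ∧ Disjoint (T i) (T j)) ∧
      Finset.univ.biUnion S = A₁ ∪ A₂ ∧
      Finset.univ.biUnion T = B₁ ∪ B₂ := by

  rintro ⟨k, S, T, hcopy, hdisj, hSU, hTU⟩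
  -- all edges between S i ∩ A₁ and T i ∩ B₁ are H-edges
  have hHadj : ∀ i, ∀ x ∈ S i ∩ A₁, ∀ y ∈ T i ∩ B₁, H.Adj x y := by
    intro i x hx y hy
    simp only [Finset.mem_inter] at hx hy
    rcases (hcopy i).2.2.2.2 x hx.1 y hy.1 with hGxy | hH
    · rw [hG] at hGxy
      rcases hGxy with ⟨_, hv⟩ | ⟨_, hv⟩ | ⟨hv, _⟩ | ⟨hv, _⟩
      · exact absurd hv (Finset.disjoint_left.mp hdB hy.2)
      · exact absurd (Finset.mem_union_right _ hv)
          (Finset.disjoint_left.mp hdAB (Finset.mem_union_left _ hx.2))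
      · exact absurd hv (Finset.disjoint_left.mp hdA hx.2)
      · exact absurd (Finset.mem_union_left _ hy.2)
          (Finset.disjoint_left.mp hdAB (Finset.mem_union_right _ hv))
    · exact hH
  have hdS : ∀ i ∈ (Finset.univ : Finset (Fin k)), ∀ j ∈ Finset.univ, i ≠ j →
      Disjoint (S i ∩ A₁) (S j ∩ A₁) := by
    intro i _ j _ hij
    exact Finset.disjoint_of_subset_left Finset.inter_subset_left
      (Finset.disjoint_of_subset_right Finset.inter_subset_left ((hdisj i j hij).1))
  have hdT : ∀ i ∈ (Finset.univ : Finset (Fin k)), ∀ j ∈ Finset.univ, i ≠ j →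
      Disjoint (T i ∩ B₁) (T j ∩ B₁) := by
    intro i _ j _ hij
    exact Finset.disjoint_of_subset_left Finset.inter_subset_left
      (Finset.disjoint_of_subset_right Finset.inter_subset_left ((hdisj i j hij).2))
  have hdS' : ∀ i ∈ (Finset.univ : Finset (Fin k)), ∀ j ∈ Finset.univ, i ≠ j →
      Disjoint (S i) (S j) := fun i _ j _ hij => (hdisj i j hij).1
  have hbiS : Finset.univ.biUnion (fun i => S i ∩ A₁) = A₁ := by
    ext x
    simp only [Finset.mem_biUnion, Finset.mem_inter, Finset.mem_univ, true_and]
    constructor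
    · rintro ⟨i, _, hx⟩; exact hx
    · intro hx
      have : x ∈ Finset.univ.biUnion S := by
        rw [hSU]; exact Finset.mem_union_left _ hx
      simp only [Finset.mem_biUnion, Finset.mem_univ, true_and] at this
      obtain ⟨i, hi⟩ := this
      exact ⟨i, hi, hx⟩
  have hbiT : Finset.univ.biUnion (fun i => T i ∩ B₁) = B₁ := by
    ext x
    simp only [Finset.mem_biUnion, Finset.mem_inter, Finset.mem_univ, true_and]
    constructor
    · rintro ⟨i, _, hx⟩; exact hx
    · intro hx
      have : x ∈ Finset.univ.biUnion T := by
        rw [hTU]; exact Finset.mem_union_left _ hx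
      simp only [Finset.mem_biUnion, Finset.mem_univ, true_and] at this
      obtain ⟨i, hi⟩ := this
      exact ⟨i, hi, hx⟩
  have hsumA : ∑ i, (S i ∩ A₁).card = A₁.card := by
    rw [← Finset.card_biUnion hdS, hbiS]
  have hsumB : ∑ i, (T i ∩ B₁).card = B₁.card := by
    rw [← Finset.card_biUnion hdT, hbiT]
  have hsumS : ∑ i, (S i).card = A₁.card + A₂.card := by
    rw [← Finset.card_biUnion hdS', hSU, Finset.card_union_of_disjoint hdA]
  -- find a copy with many vertices in A₁ ∪ B₁
  have hex : ∃ i, h + 1 ≤ (S i ∩ A₁).card + (T i ∩ B₁).card := by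
    by_contra hc
    push_neg at hc
    have hle : ∑ i, ((S i ∩ A₁).card + (T i ∩ B₁).card) ≤ ∑ i, (S i).card := by
      apply Finset.sum_le_sum
      intro i _
      have := hc i
      rw [(hcopy i).2.2.1]
      omega
    rw [Finset.sum_add_distrib, hsumA, hsumB, hsumS] at hle
    omega
  obtain ⟨i, hi⟩ := hex
  have haleh : (S i ∩ A₁).card ≤ h :=
    le_trans (Finset.card_le_card Finset.inter_subset_left) (le_of_eq (hcopy i).2.2.1)
  have hbleh : (T i ∩ B₁).card ≤ h :=
    le_trans (Finset.card_le_card Finset.inter_subset_left) (le_of_eq (hcopy i).2.2.2.1)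
  by_cases ha2 : 2 ≤ (S i ∩ A₁).card
  · by_cases hb2 : 2 ≤ (T i ∩ B₁).card
    · -- K_{2,2}
      obtain ⟨a, ha, a', ha', haa⟩ := Finset.one_lt_card.mp ha2
      obtain ⟨b, hb, b', hb', hbb⟩ := Finset.one_lt_card.mp hb2
      exact hK22 ⟨a, a', b, b', (Finset.mem_inter.mp ha).2, (Finset.mem_inter.mp ha').2,
        (Finset.mem_inter.mp hb).2, (Finset.mem_inter.mp hb').2, haa, hbb,
        hHadj i a ha b hb, hHadj i a ha b' hb', hHadj i a' ha' b hb, hHadj i a' ha' b' hb'⟩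
    · -- (T i ∩ B₁).card ≤ 1, so = 1 and (S i ∩ A₁).card = h
      have hb1 : (T i ∩ B₁).card = 1 := by omega
      obtain ⟨v, hv⟩ := Finset.card_eq_one.mp hb1
      have hvmem : v ∈ T i ∩ B₁ := by rw [hv]; exact Finset.mem_singleton_self v
      have hah : (S i ∩ A₁).card = h := by omega
      apply hK1h
      refine ⟨v, S i ∩ A₁, Finset.mem_union_right _ (Finset.mem_inter.mp hvmem).2, ?_, hah, ?_⟩
      · exact Finset.coe_subset.mpr
          (fun x hx => Finset.mem_union_left _ (Finset.mem_inter.mp hx).2)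
      · intro x hx
        exact (hHadj i x hx v hvmem).symm
  · -- (S i ∩ A₁).card ≤ 1, so = 1 and (T i ∩ B₁).card = h
    have ha1 : (S i ∩ A₁).card = 1 := by omega
    obtain ⟨v, hv⟩ := Finset.card_eq_one.mp ha1
    have hvmem : v ∈ S i ∩ A₁ := by rw [hv]; exact Finset.mem_singleton_self v
    have hbh : (T i ∩ B₁).card = h := by omega
    apply hK1h
    refine ⟨v, T i ∩ B₁, Finset.mem_union_left _ (Finset.mem_inter.mp hvmem).2, ?_, hbh, ?_⟩
    · exact Finset.coe_subset.mpr
        (fun x hx => Finset.mem_union_right _ (Finset.mem_inter.mp hx).2)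
    · intro x hx
      exact hHadj i v hvmem x hx
end
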